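/- arXiv:2010.03729 — 2 statements merged into one kernel-verified Lean document; each statement's English description precedes it below -/
import Mathlib

section
/- Let d ≥ 1 and λ > 0, and let ν_λ be the probability measure on ℝᵈ × ℝᵈ with density (u, v) ↦ (2π)^{−d} 3^{−d/2} λ^{−d} exp(−(‖u‖² − ⟨u, v⟩ + ‖v‖²)/(3λ)) with respect to Lebesgue measure. Then for every bounded measurable φ : ℝ → ℝ, one has ∫ φ(‖u‖) φ(‖v‖) dν_λ(u, v) ≥ 0. -/
open MeasureTheory
open scoped RealInnerProductSpace
open Real

/-!
Let `g` be the density of `𝒩(0, λ I_d)`. Completing the square in `x` shows that the density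
of `ν_λ` is `∫ g(x) g(u - x) g(v - x) dx`, i.e. `ν_λ` is the law of `(X + Y, X + Z)` for
independent `X, Y, Z ∼ 𝒩(0, λ I_d)`. By Fubini, the integral of `φ(‖u‖) φ(‖v‖)` against it is
`∫ g(x) (∫ φ(‖u‖) g(u - x) du)² dx ≥ 0`.
-/

theorem integral_gram_kernel_mul_mul_nonneg {α β : Type*} [MeasurableSpace α]
    [MeasurableSpace β] {μ : Measure α} {ν : Measure β} [SFinite μ] [SFinite ν]
    {f : α → ℝ} {w : β → ℝ} {C : ℝ} (k : α → β → ℝ) (hf : Measurable f) (hC : ∀ u, |f u| ≤ C)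
    (hw : ∀ x, 0 ≤ w x)
    (hint : Integrable (fun z : (α × α) × β => w z.2 * k z.1.1 z.2 * k z.1.2 z.2)
      ((μ.prod μ).prod ν)) :
    0 ≤ ∫ p : α × α, (∫ x, w x * k p.1 x * k p.2 x ∂ν) * (f p.1 * f p.2) ∂(μ.prod μ) := by
  have hprod : Integrable (fun z : (α × α) × β =>
      f z.1.1 * f z.1.2 * (w z.2 * k z.1.1 z.2 * k z.1.2 z.2)) ((μ.prod μ).prod ν) := by
    refine hint.bdd_mul (c := C * C) ?_ (Filter.Eventually.of_forall fun z => ?_)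
    · exact ((hf.comp measurable_fst.fst).mul (hf.comp measurable_fst.snd)).aestronglyMeasurable
    · rw [Real.norm_eq_abs, abs_mul]
      exact mul_le_mul (hC _) (hC _) (abs_nonneg _) ((abs_nonneg (f z.1.1)).trans (hC _))
  calc (0 : ℝ) ≤ ∫ x, w x * (∫ u, f u * k u x ∂μ) ^ 2 ∂ν :=
        integral_nonneg fun x => mul_nonneg (hw x) (sq_nonneg _)
    _ = ∫ x, ∫ p, f p.1 * f p.2 * (w x * k p.1 x * k p.2 x) ∂(μ.prod μ) ∂ν := by
        congr 1 with x
        rw [sq, ← integral_prod_mul, ← integral_const_mul]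
        congr 1 with p
        ring
    _ = ∫ p, ∫ x, f p.1 * f p.2 * (w x * k p.1 x * k p.2 x) ∂ν ∂(μ.prod μ) :=
        (integral_integral_swap hprod).symm
    _ = _ := by
        congr 1 with p
        rw [integral_const_mul, mul_comm]

section Gaussian

variable {E : Type*} [NormedAddCommGroup E] [InnerProductSpace ℝ E]

theorem norm_sq_add_norm_sub_sq_add_norm_sub_sq (u v x : E) :
    ‖x‖ ^ 2 + ‖u - x‖ ^ 2 + ‖v - x‖ ^ 2
      = 3 * ‖x - (3 : ℝ)⁻¹ • (u + v)‖ ^ 2 + 2 / 3 * (‖u‖ ^ 2 - ⟪u, v⟫ + ‖v‖ ^ 2) := by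
  rw [norm_sub_sq_real, norm_sub_sq_real, norm_sub_sq_real, norm_smul, mul_pow,
    norm_add_sq_real, real_inner_smul_right, inner_add_right, real_inner_comm x u,
    real_inner_comm x v]
  norm_num
  ring

variable [FiniteDimensional ℝ E] [MeasurableSpace E] [BorelSpace E]

theorem integrable_rexp_neg_mul_sq_norm {b : ℝ} (hb : 0 < b) :
    Integrable (fun x : E => rexp (-(b * ‖x‖ ^ 2))) := by
  refine (GaussianFourier.integrable_cexp_neg_mul_sq_norm_add (V := E)
      (b := (b : ℂ)) (by simpa using hb) 0 0).norm.congr (Filter.Eventually.of_forall fun x => ?_)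
  simp [Complex.norm_exp, neg_mul, ← Complex.ofReal_pow]

theorem integral_rexp_neg_mul_sq_norm_mul_sub_mul_sub {b : ℝ} (hb : 0 < b) (u v : E) :
    ∫ x, rexp (-(b * ‖x‖ ^ 2)) * rexp (-(b * ‖u - x‖ ^ 2)) * rexp (-(b * ‖v - x‖ ^ 2))
      = (π / (3 * b)) ^ (Module.finrank ℝ E / 2 : ℝ)
        * rexp (-(2 * b / 3 * (‖u‖ ^ 2 - ⟪u, v⟫ + ‖v‖ ^ 2))) := by
  have hsplit : ∀ x : E,
      rexp (-(b * ‖x‖ ^ 2)) * rexp (-(b * ‖u - x‖ ^ 2)) * rexp (-(b * ‖v - x‖ ^ 2))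
        = rexp (-(3 * b) * ‖x - (3 : ℝ)⁻¹ • (u + v)‖ ^ 2)
          * rexp (-(2 * b / 3 * (‖u‖ ^ 2 - ⟪u, v⟫ + ‖v‖ ^ 2))) := fun x => by
    rw [← Real.exp_add, ← Real.exp_add, ← Real.exp_add]
    congr 1
    linear_combination (-b) * norm_sq_add_norm_sub_sq_add_norm_sub_sq u v x
  simp_rw [hsplit]
  rw [integral_mul_const, integral_sub_right_eq_self (fun y : E => rexp (-(3 * b) * ‖y‖ ^ 2)),
    GaussianFourier.integral_rexp_neg_mul_sq_norm (by positivity)]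

theorem integrable_rexp_neg_mul_sq_norm_mul_sub_mul_sub {b : ℝ} (hb : 0 < b) :
    Integrable (fun z : (E × E) × E =>
      rexp (-(b * ‖z.2‖ ^ 2)) * rexp (-(b * ‖z.1.1 - z.2‖ ^ 2)) * rexp (-(b * ‖z.1.2 - z.2‖ ^ 2)))
      ((volume.prod volume).prod volume) := by
  have hK := integrable_rexp_neg_mul_sq_norm (E := E) hb
  refine (integrable_prod_iff' (Continuous.aestronglyMeasurable (by fun_prop))).2
    ⟨Filter.Eventually.of_forall fun x => ?_, ?_⟩
  · simp_rw [mul_assoc]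
    exact ((hK.comp_sub_right x).mul_prod (hK.comp_sub_right x)).const_mul _
  · have hnorm : ∀ x : E, ∫ p : E × E, ‖rexp (-(b * ‖x‖ ^ 2)) * rexp (-(b * ‖p.1 - x‖ ^ 2))
        * rexp (-(b * ‖p.2 - x‖ ^ 2))‖ ∂(volume.prod volume)
        = rexp (-(b * ‖x‖ ^ 2)) * (∫ y : E, rexp (-(b * ‖y‖ ^ 2))) ^ 2 := fun x => by
      simp_rw [Real.norm_eq_abs, abs_mul, abs_exp, mul_assoc]
      rw [integral_const_mul, integral_prod_mul (fun u : E => rexp (-(b * ‖u - x‖ ^ 2)))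
        (fun v : E => rexp (-(b * ‖v - x‖ ^ 2))),
        integral_sub_right_eq_self (fun y : E => rexp (-(b * ‖y‖ ^ 2))), ← sq]
    simp_rw [hnorm]
    exact hK.mul_const _

end Gaussian

theorem statement7_general (d : ℕ) (l : ℝ) (hl : 0 < l)
    (φ : ℝ → ℝ) (hφm : Measurable φ) (hφb : ∃ C, ∀ r, |φ r| ≤ C) :
    0 ≤ ∫ p : EuclideanSpace ℝ (Fin d) × EuclideanSpace ℝ (Fin d),
          φ ‖p.1‖ * φ ‖p.2‖
        ∂(volume.withDensity
            (fun p : EuclideanSpace ℝ (Fin d) × EuclideanSpace ℝ (Fin d) =>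
              ENNReal.ofReal ((2 * Real.pi) ^ (-(d : ℝ)) * (3 : ℝ) ^ (-(d : ℝ) / 2) *
                l ^ (-(d : ℝ)) *
                Real.exp (-(‖p.1‖ ^ 2 - ⟪p.1, p.2⟫ + ‖p.2‖ ^ 2) / (3 * l))))) := by
  set b : ℝ := (2 * l)⁻¹
  have hb : 0 < b := by positivity
  set c : ℝ := (2 * π) ^ (-(d : ℝ)) * (3 : ℝ) ^ (-(d : ℝ) / 2) * l ^ (-(d : ℝ))
  set A : ℝ := (π / (3 * b)) ^ (Module.finrank ℝ (EuclideanSpace ℝ (Fin d)) / 2 : ℝ)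
  have hdensity : ∀ p : EuclideanSpace ℝ (Fin d) × EuclideanSpace ℝ (Fin d),
      c * rexp (-(‖p.1‖ ^ 2 - ⟪p.1, p.2⟫ + ‖p.2‖ ^ 2) / (3 * l))
        = c / A * ∫ x, rexp (-(b * ‖x‖ ^ 2)) * rexp (-(b * ‖p.1 - x‖ ^ 2))
          * rexp (-(b * ‖p.2 - x‖ ^ 2)) := fun p => by
    have hA : 0 < A := by positivity
    rw [integral_rexp_neg_mul_sq_norm_mul_sub_mul_sub hb]
    change _ = c / A * (A * _)
    rw [← mul_assoc, div_mul_cancel₀ _ hA.ne']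
    congr 2
    simp only [b]
    field_simp
  rw [integral_withDensity_eq_integral_toReal_smul (by fun_prop)
    (Filter.Eventually.of_forall fun _ => ENNReal.ofReal_lt_top)]
  have hnonneg : ∀ p : EuclideanSpace ℝ (Fin d) × EuclideanSpace ℝ (Fin d),
      0 ≤ c * rexp (-(‖p.1‖ ^ 2 - ⟪p.1, p.2⟫ + ‖p.2‖ ^ 2) / (3 * l)) := fun p => by positivity
  simp_rw [fun p => ENNReal.toReal_ofReal (hnonneg p), hdensity, smul_eq_mul, mul_assoc (c / A),
    integral_const_mul, Measure.volume_eq_prod]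
  obtain ⟨C, hC⟩ := hφb
  exact mul_nonneg (by positivity) (integral_gram_kernel_mul_mul_nonneg
    (fun u x => rexp (-(b * ‖u - x‖ ^ 2))) (hφm.comp measurable_norm) (fun u => hC ‖u‖)
    (fun x => (exp_pos _).le) (integrable_rexp_neg_mul_sq_norm_mul_sub_mul_sub hb))

/-- Nonnegativity of the two-point Gaussian correlation: if `ν_λ` is the
centered Gaussian measure on `ℝᵈ × ℝᵈ` with block covariance `λ·[[2I, I],[I, 2I]]`
(density `(2π)^{−d} 3^{−d/2} λ^{−d} exp(−(‖u‖² − ⟨u,v⟩ + ‖v‖²)/(3λ))`), then for every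
bounded measurable `φ : ℝ → ℝ` one has `∫ φ(‖u‖)φ(‖v‖) dν_λ(u,v) ≥ 0`. -/
theorem statement7 (d : ℕ) (hd : 1 ≤ d) (l : ℝ) (hl : 0 < l)
    (φ : ℝ → ℝ) (hφm : Measurable φ) (hφb : ∃ C, ∀ r, |φ r| ≤ C) :
    0 ≤ ∫ p : EuclideanSpace ℝ (Fin d) × EuclideanSpace ℝ (Fin d),
          φ ‖p.1‖ * φ ‖p.2‖
        ∂(volume.withDensity
            (fun p : EuclideanSpace ℝ (Fin d) × EuclideanSpace ℝ (Fin d) =>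
              ENNReal.ofReal ((2 * Real.pi) ^ (-(d : ℝ)) * (3 : ℝ) ^ (-(d : ℝ) / 2) *
                l ^ (-(d : ℝ)) *
                Real.exp (-(‖p.1‖ ^ 2 - ⟪p.1, p.2⟫ + ‖p.2‖ ^ 2) / (3 * l))))) :=
  statement7_general d l hl φ hφm hφb
end

section
/- Let T > 0 and A, B ≥ 0. Let u : [0, T] → ℝ be continuous and nonnegative, and let a : [0, T] → ℝ be nonnegative and nondecreasing. Suppose that for every t ∈ [0, T], u(t) ≤ a(t) + A·∫₀ᵗ u(s) ds + B·∫₀ᵗ (∫₀ᵖ u(s) ds) dp. Then for every t ∈ [0, T], u(t) ≤ a(T) · (1 + (A + B·T)·T·exp((A + B·T)·T)). -/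
/-!
Let `v t = ∫₀ᵗ u`. Since `u ≥ 0`, `v` is nondecreasing, so the memory term `∫₀ᵗ v` is at
most `T v(t)`, and together with `a t ≤ a T` the hypothesis becomes the linear inequality
`v' = u ≤ a T + (A + B T) v`. The classical Grönwall comparison for `v` then gives
`u t ≤ a T · exp ((A + B T) t)`, and `exp x ≤ 1 + x exp x` turns this into the stated bound.
-/

open Set Filter Topology Real intervalIntegral

theorem Real.exp_le_one_add_mul_exp (x : ℝ) : exp x ≤ 1 + x * exp x := by
  nlinarith [add_one_le_exp (-x), exp_pos x, exp_neg x, mul_inv_cancel₀ (exp_pos x).ne']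

theorem add_mul_gronwallBound_zero (K ε x : ℝ) :
    ε + K * gronwallBound 0 K ε x = ε * exp (K * x) := by
  rcases eq_or_ne K 0 with rfl | hK
  · simp
  · rw [gronwallBound_of_K_ne_0 hK]
    field_simp
    ring

theorem ContinuousOn.hasDerivWithinAt_integral_Ici {E : Type*} [NormedAddCommGroup E]
    [NormedSpace ℝ E] [CompleteSpace E] {f : ℝ → E} {a b x : ℝ}
    (hf : ContinuousOn f (Icc a b)) (hx : x ∈ Ico a b) :
    HasDerivWithinAt (fun t => ∫ s in a..t, f s) (f x) (Ici x) x := by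
  have hIcc : Icc a b ∈ 𝓝[>] x :=
    mem_of_superset (Icc_mem_nhdsGT hx.2) (Icc_subset_Icc_left hx.1)
  exact integral_hasDerivWithinAt_right
    ((hf.mono (Icc_subset_Icc_right hx.2.le)).intervalIntegrable_of_Icc hx.1)
    ((hf.stronglyMeasurableAtFilter_nhdsWithin measurableSet_Icc x).filter_mono
      (nhdsWithin_le_iff.2 hIcc))
    ((hf x (Ico_subset_Icc_self hx)).mono_of_mem_nhdsWithin hIcc)

theorem le_mul_exp_of_le_add_mul_integral {u : ℝ → ℝ} {a b c K : ℝ} (hK : 0 ≤ K)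
    (hu : ContinuousOn u (Icc a b)) (h : ∀ t ∈ Icc a b, u t ≤ c + K * ∫ s in a..t, u s) :
    ∀ t ∈ Icc a b, u t ≤ c * exp (K * (t - a)) := by
  intro t ht
  have hab : a ≤ b := ht.1.trans ht.2
  have hprim : ContinuousOn (fun t => ∫ s in a..t, u s) (Icc a b) := by
    simpa only [uIcc_of_le hab] using
      continuousOn_primitive_interval (hu.integrableOn_Icc.mono_set (uIcc_of_le hab).subset)
  have hgron := le_gronwallBound_of_liminf_deriv_right_le hprim
    (fun x hx _ hr => (hu.hasDerivWithinAt_integral_Ici hx).liminf_right_slope_le hr)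
    integral_same.le (fun x hx => (h x (Ico_subset_Icc_self hx)).trans_eq (add_comm _ _)) t ht
  calc u t ≤ c + K * ∫ s in a..t, u s := h t ht
    _ ≤ c + K * gronwallBound 0 K c (t - a) := by gcongr
    _ = c * exp (K * (t - a)) := add_mul_gronwallBound_zero K c (t - a)

theorem integral_integral_le_mul_integral {u : ℝ → ℝ} {a b x : ℝ}
    (hu : ContinuousOn u (Icc a b)) (hu_nonneg : ∀ s ∈ Icc a b, 0 ≤ u s) (hx : x ∈ Icc a b) :
    ∫ p in a..x, ∫ s in a..p, u s ≤ (b - a) * ∫ s in a..x, u s := by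
  have hux : IntervalIntegrable u MeasureTheory.volume a x :=
    (hu.mono (Icc_subset_Icc_right hx.2)).intervalIntegrable_of_Icc hx.1
  have hnonneg : ∀ s ∈ Icc a x, 0 ≤ u s := fun s hs => hu_nonneg s ⟨hs.1, hs.2.trans hx.2⟩
  have hprim : ContinuousOn (fun p => ∫ s in a..p, u s) (Icc a x) := by
    simpa only [uIcc_of_le hx.1] using continuousOn_primitive_interval' hux left_mem_uIcc
  calc ∫ p in a..x, ∫ s in a..p, u s ≤ ∫ _ in a..x, ∫ s in a..x, u s := by
        refine integral_mono_on hx.1 (hprim.intervalIntegrable_of_Icc hx.1)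
          intervalIntegrable_const fun p hp => integral_mono_interval le_rfl hp.1 hp.2 ?_ hux
        exact (MeasureTheory.ae_restrict_mem measurableSet_Ioc).mono fun s hs =>
          hnonneg s (Ioc_subset_Icc_self hs)
    _ = (x - a) * ∫ s in a..x, u s := by simp
    _ ≤ (b - a) * ∫ s in a..x, u s := by
        gcongr
        · exact integral_nonneg hx.1 hnonneg
        · exact hx.2

theorem statement11_general (T A B : ℝ) (hA : 0 ≤ A) (hB : 0 ≤ B)
    (u a : ℝ → ℝ)
    (hu_cont : ContinuousOn u (Set.Icc 0 T))
    (hu_nonneg : ∀ t ∈ Set.Icc (0 : ℝ) T, 0 ≤ u t)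
    (ha_nonneg : ∀ t ∈ Set.Icc (0 : ℝ) T, 0 ≤ a t)
    (ha_mono : ∀ s ∈ Set.Icc (0 : ℝ) T, ∀ t ∈ Set.Icc (0 : ℝ) T, s ≤ t → a s ≤ a t)
    (hineq : ∀ t ∈ Set.Icc (0 : ℝ) T,
      u t ≤ a t + A * (∫ s in (0 : ℝ)..t, u s)
            + B * (∫ p in (0 : ℝ)..t, ∫ s in (0 : ℝ)..p, u s)) :
    ∀ t ∈ Set.Icc (0 : ℝ) T,
      u t ≤ a T * (1 + (A + B * T) * T * Real.exp ((A + B * T) * T)) := by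
  intro t ht
  have hT : T ∈ Icc 0 T := ⟨ht.1.trans ht.2, le_rfl⟩
  have haT := ha_nonneg T hT
  set C := A + B * T
  have hC : 0 ≤ C := by have := hT.1; positivity
  have hlinear : ∀ x ∈ Icc 0 T, u x ≤ a T + C * ∫ s in (0 : ℝ)..x, u s := by
    intro x hx
    calc u x ≤ a x + A * (∫ s in (0 : ℝ)..x, u s) + B * ((T - 0) * ∫ s in (0 : ℝ)..x, u s) := by
          grw [← integral_integral_le_mul_integral hu_cont hu_nonneg hx]
          exact hineq x hx
      _ ≤ a T + C * ∫ s in (0 : ℝ)..x, u s := by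
          grw [ha_mono x hx T hT hx.2]
          linarith
  calc u t ≤ a T * exp (C * (t - 0)) := le_mul_exp_of_le_add_mul_integral hC hu_cont hlinear t ht
    _ ≤ a T * exp (C * T) := by gcongr; linarith [ht.2]
    _ ≤ a T * (1 + C * T * exp (C * T)) := by gcongr; exact exp_le_one_add_mul_exp _

/-- Grönwall-type inequality with an iterated (double-integral) memory
term: if `u ≤ a(t) + A∫₀ᵗ u + B∫₀ᵗ∫₀ᵖ u` on `[0, T]` with `u` continuous nonnegative and
`a` nonnegative nondecreasing, then `u(t) ≤ a(T)(1 + (A + BT)T·exp((A + BT)T))` on `[0,T]`. -/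
theorem statement11 (T A B : ℝ) (hT : 0 < T) (hA : 0 ≤ A) (hB : 0 ≤ B)
    (u a : ℝ → ℝ)
    (hu_cont : ContinuousOn u (Set.Icc 0 T))
    (hu_nonneg : ∀ t ∈ Set.Icc (0 : ℝ) T, 0 ≤ u t)
    (ha_nonneg : ∀ t ∈ Set.Icc (0 : ℝ) T, 0 ≤ a t)
    (ha_mono : ∀ s ∈ Set.Icc (0 : ℝ) T, ∀ t ∈ Set.Icc (0 : ℝ) T, s ≤ t → a s ≤ a t)
    (hineq : ∀ t ∈ Set.Icc (0 : ℝ) T,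
      u t ≤ a t + A * (∫ s in (0 : ℝ)..t, u s)
            + B * (∫ p in (0 : ℝ)..t, ∫ s in (0 : ℝ)..p, u s)) :
    ∀ t ∈ Set.Icc (0 : ℝ) T,
      u t ≤ a T * (1 + (A + B * T) * T * Real.exp ((A + B * T) * T)) :=
  statement11_general T A B hA hB u a hu_cont hu_nonneg ha_nonneg ha_mono hineq
end
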